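/- Let t₀ ∈ ℝ. For g : ℝ → ℂ define R̃_g(t, τ) := (−g(t) + 7·g(t−τ) + 7·g(t−2τ) − g(t−3τ))/12. Then the four-step symmetric scheme's local truncation error, i.e. the function TE(τ) := (i/τ)·(R̃_v(t₀+τ, τ) − R̃_v(t₀, τ)) + (1/2)·(R̃_w(t₀+τ, τ) + R̃_w(t₀, τ)) − (λ/4)·( |R̃_v(t₀+τ, τ)|² + |R̃_v(t₀, τ)|² )·(R̃_v(t₀+τ, τ) + R̃_v(t₀, τ)), is O(τ²) as τ → 0⁺, i.e. TE =O[𝓝[>]0] (fun τ => τ²). -/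

import Mathlib

open Filter Topology

/-- The four-step symmetric combination
`R̃_g(t, τ) = (−g(t) + 7g(t−τ) + 7g(t−2τ) − g(t−3τ))/12`. -/
noncomputable def RtildeSym (g : ℝ → ℂ) (t τ : ℝ) : ℂ :=
  (-g t + 7 * g (t - τ) + 7 * g (t - 2*τ) - g (t - 3*τ)) / 12

/-!
The truncation error is `τ⁻¹ A(τ) + B(τ)` with `A(τ) = i (R̃_v(t₀+τ, τ) - R̃_v(t₀, τ))`, so that
`A(0) = 0`, and `B` the averaged right-hand side. The maps `τ ↦ R̃_g(t₀+τ, τ)` and `τ ↦ R̃_g(t₀, τ)`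
are finite-difference stencils, so their `k`-th derivatives at `τ = 0` are the `k`-th moments of
the weights times `g⁽ᵏ⁾(t₀)`. Expanding `A` to third and `B` to second order, the constant term of
`τ⁻¹ A + B` is `A'(0) + B(0)`, which vanishes by the equation at `t₀`, and the linear term is
`A''(0)/2 + B'(0)`, which vanishes by the time derivative of the equation.
-/

open Asymptotics

section

variable {E : Type*} [NormedAddCommGroup E] [NormedSpace ℝ E]

theorem taylor_isBigO_univ {f : ℝ → E} {x₀ : ℝ} {n : ℕ} (hf : ContDiff ℝ n f) :
    (fun x => f x - ∑ k ∈ Finset.range n,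
        ((k.factorial : ℝ)⁻¹ * (x - x₀) ^ k) • iteratedDeriv k f x₀)
      =O[𝓝 x₀] fun x => (x - x₀) ^ n := by
  have hlast : (fun x => ((n.factorial : ℝ)⁻¹ * (x - x₀) ^ n) • iteratedDeriv n f x₀)
      =O[𝓝 x₀] fun x => (x - x₀) ^ n :=
    .of_bound ((n.factorial : ℝ)⁻¹ * ‖iteratedDeriv n f x₀‖) <| .of_forall fun x => by
      rw [norm_smul, norm_mul, norm_inv, RCLike.norm_natCast]
      exact le_of_eq (by ring)
  refine ((taylor_isLittleO_univ hf).isBigO.add hlast).congr_left fun x => ?_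
  simp only [taylor_within_apply, Finset.sum_range_succ, iteratedDerivWithin_univ]
  abel

theorem isBigO_inv_smul_add_sq {A B : ℝ → E} (hA : ContDiff ℝ 3 A) (hB : ContDiff ℝ 2 B)
    (hA₀ : A 0 = 0) (h₁ : deriv A 0 + B 0 = 0)
    (h₂ : iteratedDeriv 2 A 0 + (2 : ℝ) • deriv B 0 = 0) :
    (fun τ => τ⁻¹ • A τ + B τ) =O[𝓝[≠] 0] fun τ => τ ^ 2 := by
  have hTA := taylor_isBigO_univ (x₀ := 0) hA
  have hTB := taylor_isBigO_univ (x₀ := 0) hB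
  simp only [Finset.sum_range_succ, Finset.sum_range_zero, iteratedDeriv_zero, iteratedDeriv_one,
    hA₀, sub_zero, Nat.factorial_zero, Nat.factorial_one, Nat.factorial_two, Nat.cast_one,
    Nat.cast_ofNat, inv_one, pow_zero, pow_one, one_mul, smul_zero, zero_add, one_smul] at hTA hTB
  have hinv : (fun τ : ℝ => τ⁻¹ •
        (A τ - (τ • deriv A 0 + ((2 : ℝ)⁻¹ * τ ^ 2) • iteratedDeriv 2 A 0)))
      =O[𝓝[≠] 0] fun τ => τ ^ 2 := by
    refine ((isBigO_refl (fun τ : ℝ => τ⁻¹) _).smul (hTA.mono nhdsWithin_le_nhds)).congr' .rfl ?_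
    filter_upwards [self_mem_nhdsWithin] with τ (hτ : τ ≠ 0)
    rw [smul_eq_mul]
    field_simp
  refine (hinv.add (hTB.mono nhdsWithin_le_nhds)).congr' ?_ .rfl
  filter_upwards [self_mem_nhdsWithin] with τ (hτ : τ ≠ 0)
  have : τ⁻¹ * ((2 : ℝ)⁻¹ * τ ^ 2) = 2⁻¹ * τ := by field_simp
  simp only [smul_sub, smul_add, smul_smul, inv_mul_cancel₀ hτ, this]
  linear_combination (norm := module) -h₁ - ((2 : ℝ)⁻¹ * τ) • h₂

variable {n : ℕ}

noncomputable def stencil (c d : Fin n → ℝ) (g : ℝ → E) (t τ : ℝ) : E :=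
  ∑ j, c j • g (t + d j * τ)

theorem stencil_zero (c d : Fin n → ℝ) (g : ℝ → E) (t : ℝ) :
    stencil c d g t 0 = (∑ j, c j) • g t := by
  simp [stencil, Finset.sum_smul]

theorem hasDerivAt_stencil {g g' : ℝ → E} (hg : ∀ x, HasDerivAt g (g' x) x)
    (c d : Fin n → ℝ) (t τ : ℝ) :
    HasDerivAt (stencil c d g t) (stencil (fun j => c j * d j) d g' t τ) τ := by
  have h := HasDerivAt.fun_sum (u := Finset.univ) fun j _ =>
    ((hg _).scomp τ (((hasDerivAt_id τ).const_mul (d j)).const_add t)).const_smul (c j)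
  unfold stencil
  simpa [mul_smul] using h

theorem ContDiff.stencil {g : ℝ → E} {k : WithTop ℕ∞} (hg : ContDiff ℝ k g) (c d : Fin n → ℝ)
    (t : ℝ) : ContDiff ℝ k (stencil c d g t) := by
  unfold _root_.stencil
  fun_prop

theorem hasDerivAt_stencil_zero {g : ℝ → E} (hg : Differentiable ℝ g) (c d : Fin n → ℝ)
    (t : ℝ) :
    HasDerivAt (stencil c d g t) ((∑ j, c j * d j) • deriv g t) 0 := by
  simpa [stencil_zero] using hasDerivAt_stencil (fun x => (hg x).hasDerivAt) c d t 0

theorem iteratedDeriv_stencil {g : ℝ → E} {k : ℕ} (hg : ContDiff ℝ k g) (c d : Fin n → ℝ)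
    (t : ℝ) :
    iteratedDeriv k (stencil c d g t) =
      stencil (fun j => c j * d j ^ k) d (iteratedDeriv k g) t := by
  induction k with
  | zero => simp
  | succ k ih =>
    have hdiff := hg.differentiable_iteratedDeriv k (by exact_mod_cast Nat.lt_succ_self k)
    ext τ
    rw [iteratedDeriv_succ, ih (hg.of_le (by exact_mod_cast Nat.le_succ k)),
      (hasDerivAt_stencil (fun x => (hdiff x).hasDerivAt) _ d t τ).deriv, iteratedDeriv_succ]
    simp only [pow_succ, mul_assoc]

theorem iteratedDeriv_stencil_zero {g : ℝ → E} {k : ℕ} (hg : ContDiff ℝ k g) (c d : Fin n → ℝ)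
    (t : ℝ) :
    iteratedDeriv k (stencil c d g t) 0 = (∑ j, c j * d j ^ k) • iteratedDeriv k g t := by
  rw [iteratedDeriv_stencil hg, stencil_zero]

end

noncomputable def symWeights : Fin 4 → ℝ := ![-1/12, 7/12, 7/12, -1/12]

theorem sum_symWeights_mul (f : Fin 4 → ℝ) :
    ∑ j, symWeights j * f j = (-f 0 + 7 * f 1 + 7 * f 2 - f 3) / 12 := by
  simp only [Fin.sum_univ_four, symWeights, Matrix.cons_val]
  ring

theorem rtildeSym_add_self_eq_stencil (g : ℝ → ℂ) (t τ : ℝ) :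
    RtildeSym g (t + τ) τ = stencil symWeights (fun j => 1 - j) g t τ := by
  simp only [RtildeSym, stencil, Fin.sum_univ_four, symWeights, Matrix.cons_val, Complex.real_smul,
    Fin.coe_ofNat_eq_mod, Nat.reduceMod]
  push_cast
  ring_nf

theorem rtildeSym_eq_stencil (g : ℝ → ℂ) (t τ : ℝ) :
    RtildeSym g t τ = stencil symWeights (fun j => -j) g t τ := by
  simp only [RtildeSym, stencil, Fin.sum_univ_four, symWeights, Matrix.cons_val, Complex.real_smul,
    Fin.coe_ofNat_eq_mod, Nat.reduceMod]
  push_cast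
  ring_nf

@[simp]
theorem rtildeSym_zero (g : ℝ → ℂ) (t : ℝ) : RtildeSym g t 0 = g t := by
  simp only [RtildeSym, mul_zero, sub_zero]
  ring

theorem hasDerivAt_rtildeSym_add_self_zero {g : ℝ → ℂ} (hg : Differentiable ℝ g) (t : ℝ) :
    HasDerivAt (fun τ => RtildeSym g (t + τ) τ) ((-1/2 : ℝ) • deriv g t) 0 := by
  simp only [rtildeSym_add_self_eq_stencil]
  refine (hasDerivAt_stencil_zero hg symWeights _ t).congr_deriv ?_
  rw [sum_symWeights_mul]
  norm_num

theorem hasDerivAt_rtildeSym_zero {g : ℝ → ℂ} (hg : Differentiable ℝ g) (t : ℝ) :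
    HasDerivAt (fun τ => RtildeSym g t τ) ((-3/2 : ℝ) • deriv g t) 0 := by
  simp only [rtildeSym_eq_stencil]
  refine (hasDerivAt_stencil_zero hg symWeights _ t).congr_deriv ?_
  rw [sum_symWeights_mul]
  norm_num

noncomputable def schemeDifference (v : ℝ → ℂ) (t₀ τ : ℝ) : ℂ :=
  Complex.I * (RtildeSym v (t₀ + τ) τ - RtildeSym v t₀ τ)

noncomputable def schemeAverage (lam : ℝ) (v w : ℝ → ℂ) (t₀ τ : ℝ) : ℂ :=
  (1/2 : ℂ) * (RtildeSym w (t₀ + τ) τ + RtildeSym w t₀ τ)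
    - ((lam : ℂ)/4) * (((‖RtildeSym v (t₀ + τ) τ‖^2 + ‖RtildeSym v t₀ τ‖^2 : ℝ)) : ℂ)
      * (RtildeSym v (t₀ + τ) τ + RtildeSym v t₀ τ)

theorem schemeDifference_eq (v : ℝ → ℂ) (t₀ : ℝ) :
    schemeDifference v t₀ = fun τ => Complex.I *
      (stencil symWeights (fun j => 1 - j) v t₀ τ - stencil symWeights (fun j => -j) v t₀ τ) := by
  ext τ
  rw [schemeDifference, rtildeSym_add_self_eq_stencil, rtildeSym_eq_stencil]

theorem contDiff_schemeDifference {k : WithTop ℕ∞} {v : ℝ → ℂ} (hv : ContDiff ℝ k v) (t₀ : ℝ) :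
    ContDiff ℝ k (schemeDifference v t₀) := by
  rw [schemeDifference_eq]
  have := hv.stencil symWeights (fun j => 1 - j) t₀
  have := hv.stencil symWeights (fun j => -j) t₀
  fun_prop

theorem iteratedDeriv_schemeDifference_zero {k : ℕ} {v : ℝ → ℂ} (hv : ContDiff ℝ k v) (t₀ : ℝ) :
    iteratedDeriv k (schemeDifference v t₀) 0 =
      Complex.I * ((∑ j, symWeights j * ((1 - j) ^ k - (-j) ^ k) : ℝ) • iteratedDeriv k v t₀) := by
  have hS := (hv.stencil symWeights (fun j => 1 - j) t₀).contDiffAt (x := 0)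
  have hR := (hv.stencil symWeights (fun j => -j) t₀).contDiffAt (x := 0)
  rw [schemeDifference_eq, iteratedDeriv_const_mul _ (hS.sub hR), iteratedDeriv_fun_sub hS hR,
    iteratedDeriv_stencil_zero hv, iteratedDeriv_stencil_zero hv, ← sub_smul]
  simp only [mul_sub, Finset.sum_sub_distrib]

theorem deriv_schemeDifference_zero {v : ℝ → ℂ} (hv : ContDiff ℝ 1 v) (t₀ : ℝ) :
    deriv (schemeDifference v t₀) 0 = Complex.I * deriv v t₀ := by
  rw [← iteratedDeriv_one, iteratedDeriv_schemeDifference_zero hv, sum_symWeights_mul,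
    iteratedDeriv_one]
  norm_num

theorem iteratedDeriv_two_schemeDifference_zero {v : ℝ → ℂ} (hv : ContDiff ℝ 2 v) (t₀ : ℝ) :
    iteratedDeriv 2 (schemeDifference v t₀) 0 = -2 * Complex.I * deriv (deriv v) t₀ := by
  rw [iteratedDeriv_schemeDifference_zero hv, sum_symWeights_mul, iteratedDeriv_succ,
    iteratedDeriv_one]
  norm_num
  ring

theorem contDiff_schemeAverage {k : WithTop ℕ∞} (lam : ℝ) {v w : ℝ → ℂ} (hv : ContDiff ℝ k v)
    (hw : ContDiff ℝ k w) (t₀ : ℝ) : ContDiff ℝ k (schemeAverage lam v w t₀) := by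
  have hS := hv.stencil symWeights (fun j => 1 - j) t₀
  have hR := hv.stencil symWeights (fun j => -j) t₀
  have := hw.stencil symWeights (fun j => 1 - j) t₀
  have := hw.stencil symWeights (fun j => -j) t₀
  have : ContDiff ℝ k (fun x : ℝ => (x : ℂ)) := Complex.ofRealCLM.contDiff
  have := (contDiff_norm_sq ℝ).comp hS
  have := (contDiff_norm_sq ℝ).comp hR
  unfold schemeAverage
  simp only [rtildeSym_add_self_eq_stencil]
  simp only [rtildeSym_eq_stencil]
  fun_prop

theorem schemeAverage_zero (lam : ℝ) (v w : ℝ → ℂ) (t₀ : ℝ) :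
    schemeAverage lam v w t₀ 0 = w t₀ - lam * ((‖v t₀‖ ^ 2 : ℝ) : ℂ) * v t₀ := by
  simp only [schemeAverage, add_zero, rtildeSym_zero]
  push_cast
  ring

theorem hasDerivAt_schemeAverage_zero (lam : ℝ) {v w : ℝ → ℂ} (hv : Differentiable ℝ v)
    (hw : Differentiable ℝ w) (t₀ : ℝ) :
    HasDerivAt (schemeAverage lam v w t₀) (-deriv w t₀ + lam *
      (((2 * inner ℝ (v t₀) (deriv v t₀) : ℝ) : ℂ) * v t₀
        + ((‖v t₀‖ ^ 2 : ℝ) : ℂ) * deriv v t₀)) 0 := by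
  have hSv := hasDerivAt_rtildeSym_add_self_zero hv t₀
  have hRv := hasDerivAt_rtildeSym_zero hv t₀
  have hSw := hasDerivAt_rtildeSym_add_self_zero hw t₀
  have hRw := hasDerivAt_rtildeSym_zero hw t₀
  have h := ((hSw.add hRw).const_mul (1/2 : ℂ)).sub
    ((((hSv.norm_sq.add hRv.norm_sq).ofReal_comp).const_mul ((lam : ℂ) / 4)).mul (hSv.add hRv))
  refine HasDerivAt.congr_deriv (f := schemeAverage lam v w t₀) h ?_
  simp only [Pi.add_apply, add_zero, rtildeSym_zero, real_inner_smul_right]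
  simp only [Complex.real_smul]
  push_cast
  ring

theorem I_mul_deriv_deriv_of_cubicNLS (lam : ℝ) {v w : ℝ → ℂ}
    (hv : Differentiable ℝ v) (hv' : Differentiable ℝ (deriv v)) (hw : Differentiable ℝ w)
    (hpde : ∀ t : ℝ, Complex.I * deriv v t = -w t + (lam : ℂ) * ((‖v t‖^2 : ℝ) : ℂ) * v t)
    (t : ℝ) :
    Complex.I * deriv (deriv v) t = -deriv w t + lam *
      (((2 * inner ℝ (v t) (deriv v t) : ℝ) : ℂ) * v t + ((‖v t‖ ^ 2 : ℝ) : ℂ) * deriv v t) := by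
  have hL := (hv' t).hasDerivAt.const_mul Complex.I
  have hR := (hw t).hasDerivAt.neg.add
    ((((hv t).hasDerivAt.norm_sq.ofReal_comp).const_mul (lam : ℂ)).mul (hv t).hasDerivAt)
  rw [show (fun t => Complex.I * deriv v t) = _ from funext hpde] at hL
  rw [hL.unique hR]
  ring

/-- The local truncation error of the four-step symmetric scheme for the cubic
nonlinear Schrödinger equation is `O(τ²)` as `τ → 0⁺`. Here `v(t) = u(x₀,t)` and
`w(t) = Δu(x₀,t)` for a smooth solution `u` of `i u_t + Δu = λ|u|²u`. -/
theorem four_step_symmetric_truncation_error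
    (lam : ℝ) (v w : ℝ → ℂ)
    (hv : ContDiff ℝ 3 v) (hw : ContDiff ℝ 2 w)
    (hpde : ∀ t : ℝ, Complex.I * deriv v t
      = -w t + (lam : ℂ) * ((‖v t‖^2 : ℝ) : ℂ) * v t)
    (t₀ : ℝ) :
    (fun τ : ℝ =>
        (Complex.I / (τ : ℂ)) * (RtildeSym v (t₀ + τ) τ - RtildeSym v t₀ τ)
        + (1/2 : ℂ) * (RtildeSym w (t₀ + τ) τ + RtildeSym w t₀ τ)
        - ((lam : ℂ)/4) *
            (((‖RtildeSym v (t₀ + τ) τ‖^2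
              + ‖RtildeSym v t₀ τ‖^2 : ℝ)) : ℂ)
            * (RtildeSym v (t₀ + τ) τ + RtildeSym v t₀ τ))
      =O[𝓝[>] (0 : ℝ)] (fun τ : ℝ => τ^2) := by
  have hv₂ : ContDiff ℝ 2 v := hv.of_le (by norm_num)
  have hvd : Differentiable ℝ v := hv.differentiable (by norm_num)
  have hwd : Differentiable ℝ w := hw.differentiable (by norm_num)
  have h₁ : deriv (schemeDifference v t₀) 0 + schemeAverage lam v w t₀ 0 = 0 := by
    rw [deriv_schemeDifference_zero (hv.of_le (by norm_num)), schemeAverage_zero]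
    linear_combination hpde t₀
  have h₂ : iteratedDeriv 2 (schemeDifference v t₀) 0
      + (2 : ℝ) • deriv (schemeAverage lam v w t₀) 0 = 0 := by
    rw [iteratedDeriv_two_schemeDifference_zero hv₂,
      (hasDerivAt_schemeAverage_zero lam hvd hwd t₀).deriv, Complex.real_smul,
      Complex.ofReal_ofNat]
    linear_combination (-2 : ℂ) * I_mul_deriv_deriv_of_cubicNLS lam hvd
      hv₂.differentiable_deriv_two hwd hpde t₀
  have key := isBigO_inv_smul_add_sq (contDiff_schemeDifference hv t₀)
    (contDiff_schemeAverage lam hv₂ hw t₀) (by simp [schemeDifference]) h₁ h₂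
  refine (key.mono (nhdsWithin_mono _ fun τ (hτ : 0 < τ) => hτ.ne')).congr_left fun τ => ?_
  simp only [schemeDifference, schemeAverage, Complex.real_smul, Complex.ofReal_inv]
  ring
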